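/- For X₁,…,Xₙ i.i.d. Bernoulli(p), the quantity r₂(i,Xⁿ) := Σ_{j=1}^n E[(E[X_j] − E[X_j | X_(i)])²] equals n p² [P(B′<i)²/P(B<i) + P(B′≥i)²/P(B≥i) − 1], where B ~ Binomial(n,1−p) and B′ ~ Binomial(n−1,1−p). -/

import Mathlib

open MeasureTheory ProbabilityTheory Real Filter Topology

/-- The `m`-th order statistic (1-based index) of the finite sample `X`. -/
noncomputable def orderStat {Ω : Type*} {n : ℕ} (X : Fin n → Ω → ℝ) (m : ℕ) (ω : Ω) : ℝ :=
  if h : m - 1 < n then (fun j => X j ω) (Tuple.sort (fun j => X j ω) ⟨m - 1, h⟩) else 0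

/-- `P(B < i)` for `B ~ Binomial(n, 1 - p)`. -/
noncomputable def binomLT (n : ℕ) (p : ℝ) (i : ℕ) : ℝ :=
  ∑ k ∈ Finset.range i, (n.choose k : ℝ) * (1 - p) ^ k * p ^ (n - k)

/-- The Bernoulli law with success probability `p`, as a measure on `ℝ`. -/
noncomputable def bernoulliLaw (p : ℝ) : Measure ℝ :=
  ENNReal.ofReal (1 - p) • Measure.dirac 0 + ENNReal.ofReal p • Measure.dirac 1

/-!
On a sample with values in `{0, 1}`, `X_(i) = 1` exactly when fewer than `i` of the `X_j`
vanish, so `X_(i)` is almost surely the indicator of `D = {B < i}`, `B` being the number of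
zeros. Hence `σ(X_(i))` agrees with `σ(D)` up to null sets, and `E[X_j | X_(i)]` equals
`P(X_j = 1, B < i) / P(B < i) = p P(B' < i) / P(B < i)` on `D` and
`p P(B' ≥ i) / P(B ≥ i)` off `D`, where `B'` counts the zeros among the other `n - 1` variables.
Averaging the squared deviation from `E[X_j] = p` over `D` and its complement gives the formula.
-/

open Finset MeasurableSpace

theorem Tuple.apply_sort_lt_iff {n : ℕ} {α : Type*} [LinearOrder α] (v : Fin n → α) (m : Fin n)
    (a : α) : v (Tuple.sort v m) < a ↔ (m : ℕ) < #{j | v j < a} := by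
  have h := (Tuple.lt_card_lt_iff_apply_lt_of_monotone (j := m) (a := a)
    (Tuple.monotone_sort v)).symm
  have hcard : #{k | v (Tuple.sort v k) < a} = #{j | v j < a} :=
    card_equiv (Tuple.sort v) (by simp)
  simpa [hcard] using h

theorem Finset.sum_powerset_filter_card_lt {β : Type*} (s : Finset β) (i : ℕ) (f : ℕ → ℝ) :
    ∑ S ∈ s.powerset with #S < i, f #S = ∑ k ∈ range i, ((#s).choose k : ℝ) * f k := by
  rw [← sum_fiberwise_of_maps_to (g := card) (t := range i) (by simp)]
  refine sum_congr rfl fun k hk => ?_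
  have hfiber : {S ∈ s.powerset | #S < i ∧ #S = k} = s.powersetCard k := by
    rw [powersetCard_eq_filter]
    exact filter_congr fun S _ => ⟨And.right, fun h => ⟨h ▸ mem_range.1 hk, h⟩⟩
  rw [filter_filter, sum_congr rfl fun S hS => by rw [(mem_filter.1 hS).2.2], hfiber, sum_const,
    card_powersetCard, nsmul_eq_mul]

section Measure

variable {Ω : Type*} {m₀ : MeasurableSpace Ω} {μ : Measure Ω} {s : Set Ω}

lemma integral_cond_eq_inv_mul_setIntegral (f : Ω → ℝ) (s : Set Ω) :
    ∫ ω, f ω ∂μ[|s] = (μ.real s)⁻¹ * ∫ ω in s, f ω ∂μ := by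
  rw [ProbabilityTheory.cond, integral_smul_measure, ENNReal.toReal_inv, measureReal_def,
    smul_eq_mul]

lemma setIntegral_of_ae_zero_or_one {Y : Ω → ℝ} (hY : Measurable Y)
    (h01 : ∀ᵐ ω ∂μ, Y ω = 0 ∨ Y ω = 1) (s : Set Ω) :
    ∫ ω in s, Y ω ∂μ = μ.real (s ∩ Y ⁻¹' {0}ᶜ) := by
  have hY1 : Y =ᵐ[μ] (Y ⁻¹' {0}ᶜ).indicator fun _ => 1 := by
    filter_upwards [h01] with ω hω
    rcases hω with h | h <;> simp [h]
  rw [integral_congr_ae (ae_restrict_of_ae hY1),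
    setIntegral_indicator (hY (measurableSet_singleton 0).compl), setIntegral_const, smul_eq_mul,
    mul_one]

lemma integral_sq_sub_piecewise [IsFiniteMeasure μ] [DecidablePred (· ∈ s)]
    (hs : MeasurableSet s) (c a b : ℝ) :
    ∫ ω, (c - s.piecewise (fun _ => a) (fun _ => b) ω) ^ 2 ∂μ
      = μ.real s * (c - a) ^ 2 + μ.real sᶜ * (c - b) ^ 2 := by
  have h : (fun ω => (c - s.piecewise (fun _ => a) (fun _ => b) ω) ^ 2)
      = s.piecewise (fun _ => (c - a) ^ 2) (fun _ => (c - b) ^ 2) := by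
    ext ω
    by_cases hω : ω ∈ s <;> simp [hω]
  rw [h, integral_piecewise hs integrableOn_const integrableOn_const, setIntegral_const,
    setIntegral_const, smul_eq_mul, smul_eq_mul]

lemma generateFrom_singleton_compl (s : Set Ω) : generateFrom {sᶜ} = generateFrom {s} :=
  le_antisymm
    (generateFrom_le fun _ ht => by
      simpa [Set.mem_singleton_iff.1 ht] using
        (measurableSet_generateFrom (Set.mem_singleton s)).compl)
    (generateFrom_le fun _ ht => by
      simpa [Set.mem_singleton_iff.1 ht] using
        (measurableSet_generateFrom (Set.mem_singleton sᶜ)).compl)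

lemma condExp_generateFrom_singleton_ae_eq_piecewise [IsFiniteMeasure μ]
    [DecidablePred (· ∈ s)] (hs : MeasurableSet s) {f : Ω → ℝ} (hf : Integrable f μ) :
    μ[f | generateFrom {s}] =ᵐ[μ]
      s.piecewise (fun _ => ∫ ω, f ω ∂μ[|s]) (fun _ => ∫ ω, f ω ∂μ[|sᶜ]) := by
  have hs' := condExp_generateFrom_singleton hs hf
  have hsc := condExp_generateFrom_singleton hs.compl hf
  rw [generateFrom_singleton_compl] at hsc
  refine ae_of_ae_restrict_of_ae_restrict_compl s ?_ ?_
  · filter_upwards [hs', ae_restrict_mem hs] with ω hω hωs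
    rw [Set.piecewise_eq_of_mem _ _ _ hωs, hω]
  · filter_upwards [hsc, ae_restrict_mem hs.compl] with ω hω hωs
    rw [Set.piecewise_eq_of_notMem _ _ _ hωs, hω]

lemma condExp_ae_eq_of_forall_ae_eq_measurableSet {m₁ m₂ : MeasurableSpace Ω} [IsFiniteMeasure μ]
    (h₁₂ : m₁ ≤ m₂) (h₂ : m₂ ≤ m₀)
    (h : ∀ s, MeasurableSet[m₂] s → ∃ t, MeasurableSet[m₁] t ∧ s =ᵐ[μ] t)
    {f : Ω → ℝ} (hf : Integrable f μ) :
    μ[f | m₂] =ᵐ[μ] μ[f | m₁] := by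
  refine (ae_eq_condExp_of_forall_setIntegral_eq h₂ hf
    (fun _ _ _ => integrable_condExp.integrableOn) (fun s hs _ => ?_)
    (stronglyMeasurable_condExp.mono h₁₂).aestronglyMeasurable).symm
  obtain ⟨t, ht, hst⟩ := h s hs
  rw [setIntegral_congr_set hst, setIntegral_condExp (h₁₂.trans h₂) hf ht,
    setIntegral_congr_set hst]

lemma exists_measurableSet_generateFrom_ae_eq {β : Type*} {T : Ω → β} {b₀ b₁ : β}
    (hT : ∀ᵐ ω ∂μ, T ω = b₀ ∨ T ω = b₁) (B : Set β) :
    ∃ t, MeasurableSet[generateFrom {T ⁻¹' {b₁}}] t ∧ T ⁻¹' B =ᵐ[μ] t := by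
  classical
  set D := T ⁻¹' {b₁}
  have hD : MeasurableSet[generateFrom {D}] D := measurableSet_generateFrom rfl
  refine ⟨(if b₁ ∈ B then D else ∅) ∪ (if b₀ ∈ B then Dᶜ else ∅), ?_, ?_⟩
  · refine MeasurableSet.union ?_ ?_ <;> split_ifs
    exacts [hD, @MeasurableSet.empty _ (generateFrom {D}), hD.compl,
      @MeasurableSet.empty _ (generateFrom {D})]
  · refine eventuallyEq_set.2 ?_
    filter_upwards [hT] with ω hω
    split_ifs <;> grind

lemma condExp_comap_ae_eq_piecewise [IsFiniteMeasure μ] {β : Type*} [MeasurableSpace β]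
    [MeasurableSingletonClass β] {T : Ω → β} (hT : Measurable T) {b₀ b₁ : β}
    (hT01 : ∀ᵐ ω ∂μ, T ω = b₀ ∨ T ω = b₁) [DecidablePred (· ∈ T ⁻¹' {b₁})] {f : Ω → ℝ}
    (hf : Integrable f μ) :
    μ[f | MeasurableSpace.comap T inferInstance] =ᵐ[μ]
      (T ⁻¹' {b₁}).piecewise (fun _ => ∫ ω, f ω ∂μ[|T ⁻¹' {b₁}])
        (fun _ => ∫ ω, f ω ∂μ[|(T ⁻¹' {b₁})ᶜ]) := by
  have hle : generateFrom {T ⁻¹' {b₁}} ≤ MeasurableSpace.comap T inferInstance :=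
    generateFrom_le fun _ ht =>
      Set.mem_singleton_iff.1 ht ▸ ⟨{b₁}, measurableSet_singleton b₁, rfl⟩
  refine (condExp_ae_eq_of_forall_ae_eq_measurableSet hle hT.comap_le ?_ hf).trans
    (condExp_generateFrom_singleton_ae_eq_piecewise (hT (measurableSet_singleton b₁)) hf)
  rintro _ ⟨B, -, rfl⟩
  exact exists_measurableSet_generateFrom_ae_eq hT01 B

end Measure

section BernoulliSample

variable {Ω : Type*} {n : ℕ} {X : Fin n → Ω → ℝ}

/-- `#(zeroSet X ω)` is the variable `B ~ Binomial(n, 1 - p)` of the statement. -/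
noncomputable def zeroSet (X : Fin n → Ω → ℝ) (ω : Ω) : Finset (Fin n) := {j | X j ω = 0}

lemma setOf_zeroSet_eq (S : Finset (Fin n)) :
    {ω | zeroSet X ω = S}
      = ⋂ j ∈ (univ : Finset (Fin n)), X j ⁻¹' (if j ∈ S then {0} else {0}ᶜ) := by
  ext ω
  simp only [zeroSet, Set.mem_ofPred_eq, Finset.ext_iff, mem_filter, mem_univ, true_and,
    Set.mem_iInter]
  refine forall_congr' fun j => ?_
  split_ifs with hj <;> simp [hj]

lemma orderStat_eq_ite {i : ℕ} (hi1 : 1 ≤ i) (hin : i ≤ n) {ω : Ω}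
    (hω : ∀ j, X j ω = 0 ∨ X j ω = 1) :
    orderStat X i ω = if #(zeroSet X ω) < i then 1 else 0 := by
  have hi : i - 1 < n := by omega
  have hzero : #{j | X j ω < 1} = #(zeroSet X ω) := by
    congr 1
    ext j
    rcases hω j with h | h <;> simp [zeroSet, h]
  have hsort := Tuple.apply_sort_lt_iff (fun j => X j ω) ⟨i - 1, hi⟩ 1
  rw [hzero] at hsort
  rw [orderStat, dif_pos hi]
  rcases hω (Tuple.sort (fun j => X j ω) ⟨i - 1, hi⟩) with h | h <;> simp only [h] at hsort ⊢
  · rw [if_neg (by simp at hsort; omega)]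
  · rw [if_pos (by simp at hsort; omega)]

variable [MeasurableSpace Ω] {μ : Measure Ω} {p : ℝ}

lemma measurable_orderStat (hmeas : ∀ j, Measurable (X j)) (i : ℕ) :
    Measurable (orderStat X i) := by
  unfold orderStat
  by_cases hi : i - 1 < n
  · simp only [dif_pos hi]
    refine measurable_of_Iio fun a => ?_
    have hset : (fun ω => X (Tuple.sort (fun j => X j ω) ⟨i - 1, hi⟩) ω) ⁻¹' Set.Iio a
        = {ω | i - 1 < ∑ j, if X j ω < a then 1 else 0} := by
      ext ω
      exact (Tuple.apply_sort_lt_iff (fun j => X j ω) ⟨i - 1, hi⟩ a).trans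
        (by rw [card_filter]; exact Iff.rfl)
    rw [hset]
    exact measurableSet_lt measurable_const <| Finset.measurable_sum _ fun j _ =>
      Measurable.ite (measurableSet_lt (hmeas j) measurable_const) measurable_const
        measurable_const
  · simp only [dif_neg hi]
    exact measurable_const

lemma measure_preimage_eq_bernoulliLaw (hmeas : ∀ j, Measurable (X j))
    (hlaw : ∀ j, μ.map (X j) = bernoulliLaw p) (j : Fin n) {s : Set ℝ} (hs : MeasurableSet s) :
    μ (X j ⁻¹' s) = bernoulliLaw p s := by
  rw [← hlaw j, Measure.map_apply (hmeas j) hs]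

lemma ae_eq_zero_or_one (hmeas : ∀ j, Measurable (X j))
    (hlaw : ∀ j, μ.map (X j) = bernoulliLaw p) : ∀ᵐ ω ∂μ, ∀ j, X j ω = 0 ∨ X j ω = 1 := by
  refine ae_all_iff.2 fun j => ?_
  have h : μ (X j ⁻¹' {0, 1}ᶜ) = 0 := by
    rw [measure_preimage_eq_bernoulliLaw hmeas hlaw j (by measurability)]
    simp [bernoulliLaw]
  filter_upwards [measure_eq_zero_iff_ae_notMem.1 h] with ω hω
  simpa [or_iff_not_imp_left] using hω

lemma ae_orderStat_eq_zero_or_one (hmeas : ∀ j, Measurable (X j))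
    (hlaw : ∀ j, μ.map (X j) = bernoulliLaw p) {i : ℕ} (hi1 : 1 ≤ i) (hin : i ≤ n) :
    ∀ᵐ ω ∂μ, orderStat X i ω = 0 ∨ orderStat X i ω = 1 := by
  filter_upwards [ae_eq_zero_or_one hmeas hlaw] with ω hω
  rw [orderStat_eq_ite hi1 hin hω]
  split_ifs <;> simp

lemma orderStat_preimage_one_ae_eq (hmeas : ∀ j, Measurable (X j))
    (hlaw : ∀ j, μ.map (X j) = bernoulliLaw p) {i : ℕ} (hi1 : 1 ≤ i) (hin : i ≤ n) :
    orderStat X i ⁻¹' {1} =ᵐ[μ] {ω | #(zeroSet X ω) < i} := by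
  refine eventuallyEq_set.2 ?_
  filter_upwards [ae_eq_zero_or_one hmeas hlaw] with ω hω
  simp [orderStat_eq_ite hi1 hin hω]

lemma measureReal_preimage_zero (hp1 : p ≤ 1) (hmeas : ∀ j, Measurable (X j))
    (hlaw : ∀ j, μ.map (X j) = bernoulliLaw p) (j : Fin n) :
    μ.real (X j ⁻¹' {0}) = 1 - p := by
  rw [measureReal_def, measure_preimage_eq_bernoulliLaw hmeas hlaw j (measurableSet_singleton 0)]
  simp [bernoulliLaw, hp1]

lemma measureReal_preimage_compl_zero (hp0 : 0 ≤ p) (hmeas : ∀ j, Measurable (X j))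
    (hlaw : ∀ j, μ.map (X j) = bernoulliLaw p) (j : Fin n) :
    μ.real (X j ⁻¹' {0}ᶜ) = p := by
  rw [measureReal_def,
    measure_preimage_eq_bernoulliLaw hmeas hlaw j (measurableSet_singleton 0).compl]
  simp [bernoulliLaw, hp0]

lemma measurableSet_zeroSet_eq (hmeas : ∀ j, Measurable (X j)) (S : Finset (Fin n)) :
    MeasurableSet {ω | zeroSet X ω = S} := by
  rw [setOf_zeroSet_eq]
  refine .biInter (Set.to_countable _) fun j _ => hmeas j ?_
  split_ifs <;> measurability

lemma measureReal_zeroSet_eq (hp0 : 0 ≤ p) (hp1 : p ≤ 1) (hmeas : ∀ j, Measurable (X j))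
    (hind : iIndepFun X μ) (hlaw : ∀ j, μ.map (X j) = bernoulliLaw p) (S : Finset (Fin n)) :
    μ.real {ω | zeroSet X ω = S} = (1 - p) ^ #S * p ^ (n - #S) := by
  have hfactor : ∀ j,
      μ.real (X j ⁻¹' (if j ∈ S then {0} else {0}ᶜ)) = if j ∈ S then 1 - p else p := by
    intro j
    split_ifs
    · exact measureReal_preimage_zero hp1 hmeas hlaw j
    · exact measureReal_preimage_compl_zero hp0 hmeas hlaw j
  rw [setOf_zeroSet_eq, measureReal_def,
    hind.measure_inter_preimage_eq_mul _ fun j _ => by split_ifs <;> measurability,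
    ENNReal.toReal_prod]
  simp only [← measureReal_def, hfactor]
  simp [prod_ite, filter_not, card_sdiff]

lemma measureReal_zeroSet_mem [IsFiniteMeasure μ] (hp0 : 0 ≤ p) (hp1 : p ≤ 1)
    (hmeas : ∀ j, Measurable (X j)) (hind : iIndepFun X μ)
    (hlaw : ∀ j, μ.map (X j) = bernoulliLaw p) (𝒜 : Finset (Finset (Fin n))) :
    μ.real {ω | zeroSet X ω ∈ 𝒜} = ∑ S ∈ 𝒜, (1 - p) ^ #S * p ^ (n - #S) := by
  have hunion : {ω | zeroSet X ω ∈ 𝒜} = ⋃ S ∈ 𝒜, {ω | zeroSet X ω = S} := by ext; simp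
  rw [hunion, measureReal_biUnion_finset (f := fun S => {ω | zeroSet X ω = S})
    (Set.pairwiseDisjoint_fiber _ _) fun S _ => measurableSet_zeroSet_eq hmeas S]
  exact sum_congr rfl fun S _ => measureReal_zeroSet_eq hp0 hp1 hmeas hind hlaw S

lemma measureReal_card_zeroSet_lt [IsFiniteMeasure μ] (hp0 : 0 ≤ p) (hp1 : p ≤ 1)
    (hmeas : ∀ j, Measurable (X j)) (hind : iIndepFun X μ)
    (hlaw : ∀ j, μ.map (X j) = bernoulliLaw p) (i : ℕ) :
    μ.real {ω | #(zeroSet X ω) < i} = binomLT n p i := by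
  have hset : {ω | #(zeroSet X ω) < i}
      = {ω | zeroSet X ω ∈ {S ∈ (univ : Finset (Fin n)).powerset | #S < i}} := by
    ext; simp
  rw [hset, measureReal_zeroSet_mem hp0 hp1 hmeas hind hlaw,
    sum_powerset_filter_card_lt (f := fun k => (1 - p) ^ k * p ^ (n - k))]
  simp [binomLT, mul_assoc]

lemma measureReal_card_zeroSet_lt_inter_ne_zero [IsFiniteMeasure μ] (hp0 : 0 ≤ p) (hp1 : p ≤ 1)
    (hmeas : ∀ j, Measurable (X j)) (hind : iIndepFun X μ)
    (hlaw : ∀ j, μ.map (X j) = bernoulliLaw p) (i : ℕ) (j : Fin n) :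
    μ.real ({ω | #(zeroSet X ω) < i} ∩ X j ⁻¹' {0}ᶜ) = p * binomLT (n - 1) p i := by
  have hset : {ω | #(zeroSet X ω) < i} ∩ X j ⁻¹' {0}ᶜ
      = {ω | zeroSet X ω ∈ {S ∈ (univ.erase j).powerset | #S < i}} := by
    ext ω
    simp [zeroSet, subset_erase, and_comm]
  rw [hset, measureReal_zeroSet_mem hp0 hp1 hmeas hind hlaw,
    sum_powerset_filter_card_lt (f := fun k => (1 - p) ^ k * p ^ (n - k)), binomLT, mul_sum]
  refine sum_congr rfl fun k _ => ?_
  rw [card_erase_of_mem (mem_univ j), card_univ, Fintype.card_fin]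
  rcases lt_or_ge k n with hk | hk
  · rw [show n - k = n - 1 - k + 1 by omega, pow_succ]
    ring
  · simp [Nat.choose_eq_zero_of_lt (show n - 1 < k by have := j.pos; omega)]

lemma integral_sq_sub_condExp_orderStat [IsProbabilityMeasure μ] (hp0 : 0 ≤ p) (hp1 : p ≤ 1)
    (hmeas : ∀ j, Measurable (X j)) (hind : iIndepFun X μ)
    (hlaw : ∀ j, μ.map (X j) = bernoulliLaw p) {i : ℕ} (hi1 : 1 ≤ i) (hin : i ≤ n)
    (h0 : 0 < binomLT n p i) (h1 : binomLT n p i < 1) (j : Fin n) :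
    ∫ ω, ((∫ ω', X j ω' ∂μ)
        - (μ[X j | MeasurableSpace.comap (orderStat X i) inferInstance]) ω) ^ 2 ∂μ
      = p ^ 2 * ((binomLT (n - 1) p i) ^ 2 / binomLT n p i
          + (1 - binomLT (n - 1) p i) ^ 2 / (1 - binomLT n p i) - 1) := by
  classical
  set q := binomLT n p i
  set q' := binomLT (n - 1) p i
  set D := orderStat X i ⁻¹' {1}
  have hT := measurable_orderStat hmeas i
  have hDm : MeasurableSet D := hT (measurableSet_singleton 1)
  have hDZ : D =ᵐ[μ] {ω | #(zeroSet X ω) < i} := orderStat_preimage_one_ae_eq hmeas hlaw hi1 hin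
  have hXj : ∀ᵐ ω ∂μ, X j ω = 0 ∨ X j ω = 1 := (ae_eq_zero_or_one hmeas hlaw).mono fun ω hω => hω j
  have hint : Integrable (X j) μ := by
    refine .of_bound (hmeas j).aestronglyMeasurable 1 ?_
    filter_upwards [hXj] with ω hω
    rcases hω with h | h <;> simp [h]
  have hEX : ∫ ω, X j ω ∂μ = p := by
    rw [← setIntegral_univ, setIntegral_of_ae_zero_or_one (hmeas j) hXj, Set.univ_inter,
      measureReal_preimage_compl_zero hp0 hmeas hlaw j]
  have hμD : μ.real D = q :=
    (measureReal_congr hDZ).trans (measureReal_card_zeroSet_lt hp0 hp1 hmeas hind hlaw i)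
  have hDX : ∫ ω in D, X j ω ∂μ = p * q' := by
    rw [setIntegral_of_ae_zero_or_one (hmeas j) hXj,
      measureReal_congr (hDZ.inter (EventuallyEq.refl _ (X j ⁻¹' {0}ᶜ)))]
    exact measureReal_card_zeroSet_lt_inter_ne_zero hp0 hp1 hmeas hind hlaw i j
  have hDcX : ∫ ω in Dᶜ, X j ω ∂μ = p - p * q' := by
    linarith [integral_add_compl hDm hint]
  calc _ = ∫ ω, (p - D.piecewise (fun _ => ∫ ω, X j ω ∂μ[|D])
          (fun _ => ∫ ω, X j ω ∂μ[|Dᶜ]) ω) ^ 2 ∂μ := by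
        refine integral_congr_ae ?_
        filter_upwards [condExp_comap_ae_eq_piecewise hT
          (ae_orderStat_eq_zero_or_one hmeas hlaw hi1 hin) hint] with ω hω
        rw [hEX, hω]
    _ = q * (p - q⁻¹ * (p * q')) ^ 2 + (1 - q) * (p - (1 - q)⁻¹ * (p - p * q')) ^ 2 := by
        rw [integral_sq_sub_piecewise hDm, integral_cond_eq_inv_mul_setIntegral,
          integral_cond_eq_inv_mul_setIntegral, probReal_compl_eq_one_sub hDm, hμD, hDX, hDcX]
    _ = _ := by
        have hq : q ≠ 0 := h0.ne'
        have hq' : 1 - q ≠ 0 := by linarith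
        field_simp
        ring

end BernoulliSample

theorem stmt5 {Ω : Type*} [MeasurableSpace Ω] (μ : Measure Ω) [IsProbabilityMeasure μ]
    (n : ℕ) (p : ℝ) (hp0 : 0 ≤ p) (hp1 : p ≤ 1) (X : Fin n → Ω → ℝ)
    (hmeas : ∀ j, Measurable (X j))
    (hind : iIndepFun X μ)
    (hlaw : ∀ j, Measure.map (X j) μ = bernoulliLaw p)
    (i : ℕ) (hi1 : 1 ≤ i) (hin : i ≤ n)
    (h0 : 0 < binomLT n p i) (h1 : binomLT n p i < 1) :
    ∑ j : Fin n,
        ∫ ω, ((∫ ω', X j ω' ∂μ)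
            - (μ[X j | MeasurableSpace.comap (orderStat X i) inferInstance]) ω) ^ 2 ∂μ
      = (n : ℝ) * p ^ 2 *
          ((binomLT (n - 1) p i) ^ 2 / binomLT n p i
            + (1 - binomLT (n - 1) p i) ^ 2 / (1 - binomLT n p i) - 1) := by
  rw [sum_congr rfl fun j _ =>
      integral_sq_sub_condExp_orderStat hp0 hp1 hmeas hind hlaw hi1 hin h0 h1 j,
    sum_const, card_univ, Fintype.card_fin, nsmul_eq_mul, mul_assoc]
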